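/- arXiv:1408.6286 — 3 statements merged into one kernel-verified Lean document; each statement's English description precedes it below -/
import Mathlib

section
/- Let Δ be an m×m matrix whose rows/columns are partitioned into three sets J_0, J_1, J_2, with Δ zero outside the blocks Δ_{J_0 J_1} and Δ_{J_1 J_2}; suppose every column of Δ_{J_0 J_1} has either zero or exactly two nonzero entries which are 1 and -1, and every row of Δ_{J_1 J_2} has either zero or exactly two nonzero entries which are 1 and -1. Then Δ is totally unimodular. -/
/-- A matrix over ℤ is totally unimodular: every square submatrix has determinant 0, 1 or -1. -/
def IsTotallyUnimodular {m n : ℕ} (A : Matrix (Fin m) (Fin n) ℤ) : Prop :=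
  ∀ (k : ℕ) (f : Fin k → Fin m) (g : Fin k → Fin n),
    Function.Injective f → Function.Injective g →
    (A.submatrix f g).det = 0 ∨ (A.submatrix f g).det = 1 ∨ (A.submatrix f g).det = -1

private lemma fin3cases : ∀ x : Fin 3, x = 0 ∨ x = 1 ∨ x = 2 := by decide

private lemma tri_mul {a b : ℤ} (ha : a = 0 ∨ a = 1 ∨ a = -1) (hb : b = 0 ∨ b = 1 ∨ b = -1) :
    a * b = 0 ∨ a * b = 1 ∨ a * b = -1 := by
  rcases ha with h | h | h <;> rcases hb with h' | h' | h' <;> simp [h, h']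

private lemma tri_negonepow (n : ℕ) :
    (-1 : ℤ) ^ n = 0 ∨ (-1 : ℤ) ^ n = 1 ∨ (-1 : ℤ) ^ n = -1 := by
  rcases Nat.even_or_odd n with h | h
  · exact Or.inr (Or.inl h.neg_one_pow)
  · exact Or.inr (Or.inr h.neg_one_pow)

/-- A surface connection matrix is totally unimodular.  The index set is
partitioned into three classes `J_0, J_1, J_2` via the classification map `c`; `Δ` vanishes
outside the blocks `J_0 × J_1` and `J_1 × J_2`; every column of the block `Δ_{J_0 J_1}` has
either zero or exactly two nonzero entries, a 1 and a -1, and every row of the block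
`Δ_{J_1 J_2}` has either zero or exactly two nonzero entries, a 1 and a -1. -/
theorem stmt12 {m : ℕ} (Δ : Matrix (Fin m) (Fin m) ℤ) (c : Fin m → Fin 3)
    (hblocks : ∀ i j : Fin m, Δ i j ≠ 0 →
      (c i = 0 ∧ c j = 1) ∨ (c i = 1 ∧ c j = 2))
    (hcols : ∀ j : Fin m, c j = 1 →
      (∀ i, c i = 0 → Δ i j = 0) ∨
      ∃ i₁ i₂ : Fin m, i₁ ≠ i₂ ∧ c i₁ = 0 ∧ c i₂ = 0 ∧
        Δ i₁ j = 1 ∧ Δ i₂ j = -1 ∧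
        ∀ i, c i = 0 → i ≠ i₁ → i ≠ i₂ → Δ i j = 0)
    (hrows : ∀ i : Fin m, c i = 1 →
      (∀ j, c j = 2 → Δ i j = 0) ∨
      ∃ j₁ j₂ : Fin m, j₁ ≠ j₂ ∧ c j₁ = 2 ∧ c j₂ = 2 ∧
        Δ i j₁ = 1 ∧ Δ i j₂ = -1 ∧
        ∀ j, c j = 2 → j ≠ j₁ → j ≠ j₂ → Δ i j = 0) :
    IsTotallyUnimodular Δ := by
  classical
  -- all entries are 0, 1 or -1
  have hval : ∀ i j, Δ i j = 0 ∨ Δ i j = 1 ∨ Δ i j = -1 := by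
    intro i j
    by_cases h : Δ i j = 0
    · exact Or.inl h
    rcases hblocks i j h with ⟨hi, hj⟩ | ⟨hi, hj⟩
    · rcases hcols j hj with h0 | ⟨i₁, i₂, _, _, _, h1, h2, hrest⟩
      · exact absurd (h0 i hi) h
      · by_cases e1 : i = i₁
        · exact Or.inr (Or.inl (e1 ▸ h1))
        by_cases e2 : i = i₂
        · exact Or.inr (Or.inr (e2 ▸ h2))
        · exact absurd (hrest i hi e1 e2) h
    · rcases hrows i hi with h0 | ⟨j₁, j₂, _, _, _, h1, h2, hrest⟩
      · exact absurd (h0 j hj) h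
      · by_cases e1 : j = j₁
        · exact Or.inr (Or.inl (e1 ▸ h1))
        by_cases e2 : j = j₂
        · exact Or.inr (Or.inr (e2 ▸ h2))
        · exact absurd (hrest j hj e1 e2) h
  -- zero lemmas
  have hz3 : ∀ i j, c i = 0 → c j ≠ 1 → Δ i j = 0 := by
    intro i j hi hj
    by_contra h
    rcases hblocks i j h with ⟨_, hj1⟩ | ⟨hi1, _⟩
    · exact hj hj1
    · rw [hi] at hi1; exact absurd hi1 (by decide)
  have hz4 : ∀ i j, c i ≠ 0 → c j ≠ 2 → Δ i j = 0 := by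
    intro i j hi hj
    by_contra h
    rcases hblocks i j h with ⟨hi0, _⟩ | ⟨_, hj2⟩
    · exact hi hi0
    · exact hj hj2
  have hz12 : ∀ i j, c i ≠ 0 → c i ≠ 1 → Δ i j = 0 := by
    intro i j hi0 hi1
    by_contra h
    rcases hblocks i j h with ⟨hi, _⟩ | ⟨hi, _⟩
    · exact hi0 hi
    · exact hi1 hi
  -- structure of columns of type 1
  have hcolStruct : ∀ j, c j = 1 → (∀ i, Δ i j = 0) ∨
      ∃ i₁ i₂, i₁ ≠ i₂ ∧ c i₁ = 0 ∧ c i₂ = 0 ∧ Δ i₁ j = 1 ∧ Δ i₂ j = -1 ∧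
        ∀ i, i ≠ i₁ → i ≠ i₂ → Δ i j = 0 := by
    intro j hj
    have hctype : ∀ i, Δ i j ≠ 0 → c i = 0 := by
      intro i h
      rcases hblocks i j h with ⟨hi, _⟩ | ⟨_, hj2⟩
      · exact hi
      · rw [hj] at hj2; exact absurd hj2 (by decide)
    rcases hcols j hj with h0 | ⟨i₁, i₂, hne, hc1, hc2, h1, h2, hrest⟩
    · left
      intro i
      by_cases h : Δ i j = 0
      · exact h
      · exact h0 i (hctype i h)
    · right
      refine ⟨i₁, i₂, hne, hc1, hc2, h1, h2, fun i e1 e2 => ?_⟩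
      by_cases h : Δ i j = 0
      · exact h
      · exact hrest i (hctype i h) e1 e2
  -- structure of rows of type 1
  have hrowStruct : ∀ i, c i = 1 → (∀ j, Δ i j = 0) ∨
      ∃ j₁ j₂, j₁ ≠ j₂ ∧ c j₁ = 2 ∧ c j₂ = 2 ∧ Δ i j₁ = 1 ∧ Δ i j₂ = -1 ∧
        ∀ j, j ≠ j₁ → j ≠ j₂ → Δ i j = 0 := by
    intro i hi
    have hctype : ∀ j, Δ i j ≠ 0 → c j = 2 := by
      intro j h
      rcases hblocks i j h with ⟨hi0, _⟩ | ⟨_, hj2⟩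
      · rw [hi] at hi0; exact absurd hi0 (by decide)
      · exact hj2
    rcases hrows i hi with h0 | ⟨j₁, j₂, hne, hc1, hc2, h1, h2, hrest⟩
    · left
      intro j
      by_cases h : Δ i j = 0
      · exact h
      · exact h0 j (hctype j h)
    · right
      refine ⟨j₁, j₂, hne, hc1, hc2, h1, h2, fun j e1 e2 => ?_⟩
      by_cases h : Δ i j = 0
      · exact h
      · exact hrest j (hctype j h) e1 e2
  intro k
  induction k with
  | zero =>
    intro f g _ _
    exact Or.inr (Or.inl Matrix.det_fin_zero)
  | succ k ih =>
    intro f g hf hg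
    set M := Δ.submatrix f g with hM
    by_cases hA : ∃ j₀, ∀ i, M i j₀ = 0
    · obtain ⟨j₀, h⟩ := hA
      exact Or.inl (Matrix.det_eq_zero_of_column_eq_zero j₀ h)
    by_cases hB : ∃ i₀, ∀ j, M i₀ j = 0
    · obtain ⟨i₀, h⟩ := hB
      exact Or.inl (Matrix.det_eq_zero_of_row_eq_zero i₀ h)
    by_cases hC : ∃ j₀ i₀, M i₀ j₀ ≠ 0 ∧ ∀ i, i ≠ i₀ → M i j₀ = 0
    · -- expand along a column with a single nonzero entry
      obtain ⟨j₀, i₀, hnz, hz⟩ := hC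
      have hexp := Matrix.det_succ_column M j₀
      rw [Finset.sum_eq_single i₀ (fun i _ hi => by rw [hz i hi]; ring)
        (fun h => absurd (Finset.mem_univ i₀) h)] at hexp
      rw [hexp, hM, Matrix.submatrix_submatrix]
      have hd := ih (f ∘ i₀.succAbove) (g ∘ j₀.succAbove)
        (hf.comp Fin.succAbove_right_injective) (hg.comp Fin.succAbove_right_injective)
      exact tri_mul (tri_mul (tri_negonepow _) (hval (f i₀) (g j₀))) hd
    by_cases hD : ∃ i₀ j₀, M i₀ j₀ ≠ 0 ∧ ∀ j, j ≠ j₀ → M i₀ j = 0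
    · -- expand along a row with a single nonzero entry
      obtain ⟨i₀, j₀, hnz, hz⟩ := hD
      have hexp := Matrix.det_succ_row M i₀
      rw [Finset.sum_eq_single j₀ (fun j _ hj => by rw [hz j hj]; ring)
        (fun h => absurd (Finset.mem_univ j₀) h)] at hexp
      rw [hexp, hM, Matrix.submatrix_submatrix]
      have hd := ih (f ∘ i₀.succAbove) (g ∘ j₀.succAbove)
        (hf.comp Fin.succAbove_right_injective) (hg.comp Fin.succAbove_right_injective)
      exact tri_mul (tri_mul (tri_negonepow _) (hval (f i₀) (g j₀))) hd
    -- now every row and every column of M has at least two nonzero entries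
    push_neg at hA hB hC hD
    left
    by_cases hE : ∃ i, c (f i) = 0
    · -- the sum of the rows of type 0 is zero
      obtain ⟨iw, hiw⟩ := hE
      rw [← Matrix.exists_vecMul_eq_zero_iff]
      refine ⟨fun i => if c (f i) = 0 then 1 else 0, ?_, ?_⟩
      · intro h0
        have := congrFun h0 iw
        simp [hiw] at this
      · funext j
        show ∑ i, (if c (f i) = 0 then (1 : ℤ) else 0) * M i j = 0
        by_cases hj1 : c (g j) = 1
        · rcases hcolStruct (g j) hj1 with h0 | ⟨i₁, i₂, hne, hc1, hc2, h1, h2, hrest⟩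
          · obtain ⟨i, hi⟩ := hA j
            exact absurd (h0 (f i)) hi
          · obtain ⟨p, hp⟩ := hA j
            obtain ⟨q, hqp, hq⟩ := hC j p hp
            have hmem : ∀ r, M r j ≠ 0 → f r = i₁ ∨ f r = i₂ := by
              intro r hr
              by_contra hcon
              push_neg at hcon
              exact hr (hrest (f r) hcon.1 hcon.2)
            obtain ⟨p₁, p₂, hfp1, hfp2⟩ :
                ∃ p₁ p₂, f p₁ = i₁ ∧ f p₂ = i₂ := by
              rcases hmem p hp with e | e <;> rcases hmem q hq with e' | e'
              · exact absurd (hf (e.trans e'.symm)) (fun h => hqp h.symm)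
              · exact ⟨p, q, e, e'⟩
              · exact ⟨q, p, e', e⟩
              · exact absurd (hf (e.trans e'.symm)) (fun h => hqp h.symm)
            have hp12 : p₁ ≠ p₂ := by
              intro h
              exact hne (hfp1 ▸ hfp2 ▸ h ▸ rfl)
            rw [Finset.sum_eq_add_of_mem p₁ p₂ (Finset.mem_univ _) (Finset.mem_univ _) hp12
              (fun r _ hr => ?_)]
            · show (if c (f p₁) = 0 then (1:ℤ) else 0) * M p₁ j
                + (if c (f p₂) = 0 then (1:ℤ) else 0) * M p₂ j = 0
              have e1 : M p₁ j = 1 := by show Δ (f p₁) (g j) = 1; rw [hfp1]; exact h1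
              have e2 : M p₂ j = -1 := by show Δ (f p₂) (g j) = -1; rw [hfp2]; exact h2
              rw [e1, e2, hfp1, hfp2, if_pos hc1, if_pos hc2]
              ring
            · by_cases h0 : c (f r) = 0
              · have : M r j = 0 := by
                  apply hrest (f r)
                  · intro h; exact hr.1 (hf (h.trans hfp1.symm))
                  · intro h; exact hr.2 (hf (h.trans hfp2.symm))
                rw [this, mul_zero]
              · rw [if_neg h0, zero_mul]
        · apply Finset.sum_eq_zero
          intro i _
          by_cases h0 : c (f i) = 0
          · have : M i j = 0 := hz3 (f i) (g j) h0 hj1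
            rw [this, mul_zero]
          · rw [if_neg h0, zero_mul]
    · -- no rows of type 0: every row sums to zero
      push_neg at hE
      rw [← Matrix.exists_mulVec_eq_zero_iff]
      refine ⟨fun _ => 1, ?_, ?_⟩
      · intro h0
        have := congrFun h0 0
        simp at this
      · funext i
        show ∑ j, M i j * 1 = 0
        simp only [mul_one]
        have hi1 : c (f i) = 1 := by
          rcases fin3cases (c (f i)) with h | h | h
          · exact absurd h (hE i)
          · exact h
          · obtain ⟨j, hj⟩ := hB i
            exact absurd (hz12 (f i) (g j) (by rw [h]; decide) (by rw [h]; decide)) hj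
        rcases hrowStruct (f i) hi1 with h0 | ⟨j₁, j₂, hne, hc1, hc2, h1, h2, hrest⟩
        · obtain ⟨j, hj⟩ := hB i
          exact absurd (h0 (g j)) hj
        · obtain ⟨p, hp⟩ := hB i
          obtain ⟨q, hqp, hq⟩ := hD i p hp
          have hmem : ∀ r, M i r ≠ 0 → g r = j₁ ∨ g r = j₂ := by
            intro r hr
            by_contra hcon
            push_neg at hcon
            exact hr (hrest (g r) hcon.1 hcon.2)
          obtain ⟨p₁, p₂, hfp1, hfp2⟩ :
              ∃ p₁ p₂, g p₁ = j₁ ∧ g p₂ = j₂ := by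
            rcases hmem p hp with e | e <;> rcases hmem q hq with e' | e'
            · exact absurd (hg (e.trans e'.symm)) (fun h => hqp h.symm)
            · exact ⟨p, q, e, e'⟩
            · exact ⟨q, p, e', e⟩
            · exact absurd (hg (e.trans e'.symm)) (fun h => hqp h.symm)
          have hp12 : p₁ ≠ p₂ := by
            intro h
            exact hne (hfp1 ▸ hfp2 ▸ h ▸ rfl)
          rw [Finset.sum_eq_add_of_mem p₁ p₂ (Finset.mem_univ _) (Finset.mem_univ _) hp12
            (fun r _ hr => ?_)]
          · have e1 : M i p₁ = 1 := by show Δ (f i) (g p₁) = 1; rw [hfp1]; exact h1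
            have e2 : M i p₂ = -1 := by show Δ (f i) (g p₂) = -1; rw [hfp2]; exact h2
            rw [e1, e2]; ring
          · apply hrest (g r)
            · intro h; exact hr.1 (hg (h.trans hfp1.symm))
            · intro h; exact hr.2 (hg (h.trans hfp2.symm))
end

section
/- Let A be an m×m matrix over a field and let j_1 < j_2 < ··· < j_t be column indices with a common positive shift r such that for each s, the entry A_{j_s - r, j_s} is nonzero and all entries of column j_s strictly below row j_s - r are zero. Then there exists a unique upper triangular matrix T with unit diagonal such that all off-diagonal entries of T outside rows j_1,...,j_t are zero and (AT)_{j_s - r, j} = 0 for all j > j_s and all s = 1,...,t. -/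
/-- The row index `p - r` (truncated subtraction), as an element of `Fin m`. -/
def shiftIdx {m : ℕ} (p : Fin m) (r : ℕ) : Fin m :=
  ⟨(p : ℕ) - r, lt_of_le_of_lt (Nat.sub_le _ _) p.isLt⟩

noncomputable def Xfun {m t : ℕ} {F : Type*} [Field F]
    (A : Matrix (Fin m) (Fin m) F) (j : Fin t → Fin m) (r : ℕ) (k : Fin m) : Fin t → F
  | s =>
    if j s < k then
      -(A (shiftIdx (j s) r) k +
        ∑ s' ∈ (Finset.univ.filter (fun s' : Fin t => s < s')).attach,
          A (shiftIdx (j s) r) (j s'.1) * Xfun A j r k s'.1) / A (shiftIdx (j s) r) (j s)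
    else 0
  termination_by s => t - (s : ℕ)
  decreasing_by
    have h1 := s'.2
    simp only [Finset.mem_filter, Finset.mem_univ, true_and] at h1
    have h2 : (s : ℕ) < (s'.1 : ℕ) := h1
    have h3 : ((s'.1 : Fin t) : ℕ) < t := (s'.1).isLt
    omega

lemma Xfun_of_not_lt {m t : ℕ} {F : Type*} [Field F]
    (A : Matrix (Fin m) (Fin m) F) (j : Fin t → Fin m) (r : ℕ) {k : Fin m} {s : Fin t}
    (h : ¬ j s < k) : Xfun A j r k s = 0 := by
  rw [Xfun]; simp [h]

lemma Xfun_of_lt {m t : ℕ} {F : Type*} [Field F]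
    (A : Matrix (Fin m) (Fin m) F) (j : Fin t → Fin m) (r : ℕ) {k : Fin m} {s : Fin t}
    (h : j s < k) :
    Xfun A j r k s =
      -(A (shiftIdx (j s) r) k +
        ∑ s' ∈ Finset.univ.filter (fun s' : Fin t => s < s'),
          A (shiftIdx (j s) r) (j s') * Xfun A j r k s') / A (shiftIdx (j s) r) (j s) := by
  rw [Xfun]
  rw [if_pos h]
  congr 1
  rw [← Finset.sum_attach (Finset.univ.filter (fun s' : Fin t => s < s'))
      (fun s' => A (shiftIdx (j s) r) (j s') * Xfun A j r k s')]

/-- Given columns `j 0 < j 1 < ⋯` and a common positive shift `r` such that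
each entry `A (j s - r) (j s)` is nonzero and all entries of column `j s` strictly below
row `j s - r` vanish, there is a unique upper triangular unit-diagonal matrix `T` whose
off-diagonal nonzero entries lie in rows `j 0, …`, such that `(A * T) (j s - r) k = 0`
for all `k > j s` and all `s`. -/
theorem stmt16 {m t : ℕ} {F : Type*} [Field F]
    (A : Matrix (Fin m) (Fin m) F) (j : Fin t → Fin m) (r : ℕ)
    (hr : 0 < r) (hmono : StrictMono j)
    (hge : ∀ s : Fin t, r ≤ (j s : ℕ))
    (hpivot : ∀ s : Fin t, A (shiftIdx (j s) r) (j s) ≠ 0)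
    (hbelow : ∀ s : Fin t, ∀ i : Fin m, shiftIdx (j s) r < i → A i (j s) = 0) :
    ∃! T : Matrix (Fin m) (Fin m) F,
      (∀ i : Fin m, T i i = 1) ∧
      (∀ i k : Fin m, k < i → T i k = 0) ∧
      (∀ i k : Fin m, i ≠ k → T i k ≠ 0 → ∃ s : Fin t, i = j s) ∧
      (∀ s : Fin t, ∀ k : Fin m, j s < k → (A * T) (shiftIdx (j s) r) k = 0) := by
  classical
  have hinj : Function.Injective j := hmono.injective
  -- entries of A in pivot rows, columns j s', vanish for s' < s
  have hAz : ∀ s s' : Fin t, s' < s → A (shiftIdx (j s) r) (j s') = 0 := by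
    intro s s' hlt
    apply hbelow s'
    have h1 : (j s' : ℕ) < (j s : ℕ) := hmono hlt
    have h2 := hge s'
    simp only [shiftIdx, Fin.lt_def]
    omega
  -- sum formula for A * D when D is row-supported on the image of j
  have hsum : ∀ D : Matrix (Fin m) (Fin m) F,
      (∀ i k : Fin m, D i k ≠ 0 → ∃ s, j s = i) →
      ∀ q k : Fin m, (A * D) q k = ∑ s, A q (j s) * D (j s) k := by
    intro D hD q k
    rw [Matrix.mul_apply]
    have hDk : ∀ i, D i k = ∑ s, if j s = i then D (j s) k else 0 := by
      intro i
      by_cases h : ∃ s, j s = i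
      · obtain ⟨s0, hs0⟩ := h
        rw [Finset.sum_eq_single s0]
        · rw [if_pos hs0, hs0]
        · intro s' _ hne
          rw [if_neg]
          intro he
          exact hne (hinj (he.trans hs0.symm))
        · simp
      · push_neg at h
        have h0 : D i k = 0 := by
          by_contra hc
          obtain ⟨s, hs⟩ := hD i k hc
          exact h s hs
        rw [h0]
        symm
        apply Finset.sum_eq_zero
        intro s _
        rw [if_neg (h s)]
    calc ∑ i, A q i * D i k
        = ∑ i, ∑ s, if j s = i then A q i * D (j s) k else 0 := by
          apply Finset.sum_congr rfl
          intro i _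
          rw [hDk i, Finset.mul_sum]
          apply Finset.sum_congr rfl
          intro s _
          rw [mul_ite, mul_zero]
      _ = ∑ s, ∑ i, if j s = i then A q i * D (j s) k else 0 := Finset.sum_comm
      _ = ∑ s, A q (j s) * D (j s) k := by
          apply Finset.sum_congr rfl
          intro s _
          rw [Finset.sum_ite_eq]
          simp
  -- key cancellation identity for Xfun
  have hkey : ∀ (s : Fin t) (k : Fin m), j s < k →
      A (shiftIdx (j s) r) k + ∑ s', A (shiftIdx (j s) r) (j s') * Xfun A j r k s' = 0 := by
    intro s k hsk
    have hXs := Xfun_of_lt A j r hsk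
    have hsplit : ∑ s', A (shiftIdx (j s) r) (j s') * Xfun A j r k s'
        = A (shiftIdx (j s) r) (j s) * Xfun A j r k s +
          ∑ s' ∈ Finset.univ.filter (fun s' : Fin t => s < s'),
            A (shiftIdx (j s) r) (j s') * Xfun A j r k s' := by
      rw [← Finset.sum_filter_add_sum_filter_not Finset.univ (fun s' : Fin t => s < s')
        (fun s' => A (shiftIdx (j s) r) (j s') * Xfun A j r k s')]
      rw [add_comm]
      congr 1
      rw [Finset.sum_eq_single_of_mem s]
      · simp
      · intro s' hs' hne
        simp only [Finset.mem_filter, Finset.mem_univ, true_and, not_lt] at hs'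
        have : s' < s := lt_of_le_of_ne hs' hne
        rw [hAz s s' this, zero_mul]
    rw [hsplit]
    set S := ∑ s' ∈ Finset.univ.filter (fun s' : Fin t => s < s'),
      A (shiftIdx (j s) r) (j s') * Xfun A j r k s' with hS
    rw [hXs, mul_comm, div_mul_cancel₀ _ (hpivot s)]
    ring
  -- the constructed matrix
  set N : Matrix (Fin m) (Fin m) F :=
    fun i k => ∑ s, if j s = i then Xfun A j r k s else 0 with hN
  set T : Matrix (Fin m) (Fin m) F :=
    fun i k => (if i = k then 1 else 0) + N i k with hT
  have hNrow : ∀ (s : Fin t) (k : Fin m), N (j s) k = Xfun A j r k s := by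
    intro s k
    show (∑ s' : Fin t, if j s' = j s then Xfun A j r k s' else 0) = Xfun A j r k s
    rw [Finset.sum_eq_single s]
    · rw [if_pos rfl]
    · intro s' _ hne
      rw [if_neg (fun he => hne (hinj he))]
    · simp
  have hNsupp : ∀ i k : Fin m, N i k ≠ 0 → ∃ s, j s = i := by
    intro i k hne
    by_contra h
    push_neg at h
    apply hne
    show (∑ s : Fin t, if j s = i then Xfun A j r k s else 0) = 0
    apply Finset.sum_eq_zero
    intro s _
    rw [if_neg (h s)]
  have hNlow : ∀ i k : Fin m, k ≤ i → N i k = 0 := by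
    intro i k hki
    show (∑ s : Fin t, if j s = i then Xfun A j r k s else 0) = 0
    apply Finset.sum_eq_zero
    intro s _
    by_cases h : j s = i
    · rw [if_pos h, Xfun_of_not_lt]
      rw [h]
      exact not_lt.mpr hki
    · rw [if_neg h]
  have hTdiag : ∀ i : Fin m, T i i = 1 := by
    intro i
    show (if i = i then (1:F) else 0) + N i i = 1
    rw [hNlow i i le_rfl, if_pos rfl, add_zero]
  have hTlow : ∀ i k : Fin m, k < i → T i k = 0 := by
    intro i k hki
    show (if i = k then (1:F) else 0) + N i k = 0
    rw [hNlow i k hki.le, if_neg (fun h => absurd h.symm (ne_of_lt hki)), add_zero]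
  have hTsupp : ∀ i k : Fin m, i ≠ k → T i k ≠ 0 → ∃ s : Fin t, i = j s := by
    intro i k hik hne
    have hne2 : (if i = k then (1:F) else 0) + N i k ≠ 0 := hne
    rw [if_neg hik, zero_add] at hne2
    have hne := hne2
    obtain ⟨s, hs⟩ := hNsupp i k hne
    exact ⟨s, hs.symm⟩
  have hTsub : ∀ i k : Fin m, T i k - (if i = k then 1 else 0) = N i k := by
    intro i k
    show ((if i = k then (1:F) else 0) + N i k) - (if i = k then (1:F) else 0) = N i k
    ring
  have hTcond : ∀ s : Fin t, ∀ k : Fin m, j s < k → (A * T) (shiftIdx (j s) r) k = 0 := by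
    intro s k hsk
    have hTN : T = (1 : Matrix (Fin m) (Fin m) F) + N := by
      funext i k'
      show (if i = k' then (1:F) else 0) + N i k' = ((1 : Matrix (Fin m) (Fin m) F) + N) i k'
      simp [Matrix.add_apply, Matrix.one_apply]
    rw [hTN, Matrix.mul_add, Matrix.mul_one, Matrix.add_apply]
    rw [hsum N hNsupp]
    have : ∀ s' : Fin t, A (shiftIdx (j s) r) (j s') * N (j s') k
        = A (shiftIdx (j s) r) (j s') * Xfun A j r k s' := by
      intro s'; rw [hNrow]
    rw [Finset.sum_congr rfl (fun s' _ => this s')]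
    exact hkey s k hsk
  refine ⟨T, ⟨hTdiag, hTlow, hTsupp, hTcond⟩, ?_⟩
  -- uniqueness
  rintro T' ⟨hd', hl', hs', hc'⟩
  have hEsupp : ∀ i k : Fin m, (T' - T) i k ≠ 0 → ∃ s, j s = i := by
    intro i k hne
    rw [Matrix.sub_apply] at hne
    by_cases hik : i = k
    · exfalso
      apply hne
      subst hik
      rw [hd' i, hTdiag i, sub_self]
    · by_cases h1 : T' i k = 0
      · rw [h1, zero_sub, neg_ne_zero] at hne
        have hNne : N i k ≠ 0 := by
          rw [← hTsub i k, if_neg hik, sub_zero]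
          exact hne
        exact hNsupp i k hNne
      · obtain ⟨s, hs⟩ := hs' i k hik h1
        exact ⟨s, hs.symm⟩
  have main : ∀ n : ℕ, ∀ s : Fin t, t - (s : ℕ) ≤ n → ∀ k : Fin m, T' (j s) k = T (j s) k := by
    intro n
    induction n with
    | zero =>
      intro s hs
      have := s.isLt
      omega
    | succ n ih =>
      intro s hs k
      by_cases hk : j s < k
      · have h0 : (A * (T' - T)) (shiftIdx (j s) r) k = 0 := by
          rw [Matrix.mul_sub, Matrix.sub_apply, hc' s k hk, hTcond s k hk, sub_self]
        rw [hsum (T' - T) hEsupp] at h0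
        have hsingle : ∑ s', A (shiftIdx (j s) r) (j s') * (T' - T) (j s') k
            = A (shiftIdx (j s) r) (j s) * (T' - T) (j s) k := by
          rw [Finset.sum_eq_single s]
          · intro s' _ hne
            rcases lt_or_gt_of_ne hne with h | h
            · rw [hAz s s' h, zero_mul]
            · have hnat : (s : ℕ) < (s' : ℕ) := h
              have hlt := s'.isLt
              have : T' (j s') k = T (j s') k := ih s' (by omega) k
              rw [Matrix.sub_apply, this, sub_self, mul_zero]
          · simp
        rw [hsingle] at h0
        have := mul_eq_zero.mp h0
        rcases this with h | h
        · exact absurd h (hpivot s)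
        · rw [Matrix.sub_apply] at h
          exact sub_eq_zero.mp h
      · push_neg at hk
        rcases lt_or_eq_of_le hk with h | h
        · rw [hl' (j s) k h, hTlow (j s) k h]
        · subst h
          rw [hd', hTdiag]
  funext i k
  by_cases h : ∃ s, j s = i
  · obtain ⟨s, hs⟩ := h
    subst hs
    exact main (t - (s : ℕ)) s le_rfl k
  · push_neg at h
    by_cases hik : i = k
    · subst hik
      rw [hd' i, hTdiag i]
    · by_cases h1 : T' i k = 0
      · rw [h1]
        symm
        by_contra hne
        obtain ⟨s, hs⟩ := hTsupp i k hik hne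
        exact h s hs.symm
      · exfalso
        obtain ⟨s, hs⟩ := hs' i k hik h1
        exact h s hs.symm
end

section
/- Let T be an m×m upper triangular matrix with unit diagonal over a field, whose row index set is partitioned into J_0,...,J_b, and whose off-diagonal nonzero entries lie in ∪_k J_k × J_k. Let Δ be an m×m matrix whose nonzero entries lie in ∪_{k=1}^b J_{k-1} × J_k. Then for each k, ((T^{-1}) Δ T)_{J_{k-1} J_k} = (T_{J_{k-1} J_{k-1}})^{-1} Δ_{J_{k-1} J_k} T_{J_k J_k}, and moreover T^{-1} Δ T again has nonzero entries only in ∪_{k=1}^b J_{k-1} × J_k. -/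
open Finset Matrix

private lemma sum_restrict' {m : ℕ} {F : Type*} [AddCommMonoid F]
    (P : Fin m → Prop) [DecidablePred P] (f : Fin m → F)
    (h : ∀ x, f x ≠ 0 → P x) :
    ∑ x : Fin m, f x = ∑ x : {x : Fin m // P x}, f x.val := by
  rw [← Finset.sum_filter_of_ne (fun x _ hx => h x hx)]
  exact Finset.sum_subtype (Finset.univ.filter P) (fun x => by simp) f

private lemma strict_upper_pow_le {m : ℕ} {F : Type*} [Field F]
    (N : Matrix (Fin m) (Fin m) F) (h : ∀ i j : Fin m, ¬ i < j → N i j = 0) :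
    ∀ n (i j : Fin m), (N ^ n) i j ≠ 0 → (i : ℕ) + n ≤ (j : ℕ) := by
  intro n
  induction n with
  | zero =>
    intro i j hij
    rw [pow_zero, Matrix.one_apply] at hij
    by_cases hij' : i = j
    · simp [hij']
    · simp [hij'] at hij
  | succ n ih =>
    intro i j hij
    rw [pow_succ, Matrix.mul_apply] at hij
    obtain ⟨p, -, hp⟩ := Finset.exists_ne_zero_of_sum_ne_zero hij
    have h1 : (N ^ n) i p ≠ 0 := fun h0 => hp (by simp [h0])
    have h2 : N p j ≠ 0 := fun h0 => hp (by simp [h0])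
    have hpj : p < j := by by_contra hc; exact h2 (h p j hc)
    have := ih i p h1
    have : (p : ℕ) < (j : ℕ) := hpj
    omega

/-- Blockwise-update lemma.  Let `T` be upper triangular with unit diagonal,
with off-diagonal support in the diagonal blocks of a partition (given by the
classification map `c`), and let `Δ` have its nonzero entries only in the superdiagonal
blocks `J_{k-1} × J_k`.  Then `T⁻¹ Δ T` again has its nonzero entries only in the
superdiagonal blocks, and each block of `T⁻¹ Δ T` satisfies
`(T⁻¹ Δ T)_{J_{k-1} J_k} = (T_{J_{k-1} J_{k-1}})⁻¹ Δ_{J_{k-1} J_k} T_{J_k J_k}`. -/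
theorem stmt18 {m b : ℕ} {F : Type*} [Field F]
    (T Δ : Matrix (Fin m) (Fin m) F) (c : Fin m → Fin (b + 1))
    (hTdiag : ∀ i : Fin m, T i i = 1)
    (hTtri : ∀ i j : Fin m, j < i → T i j = 0)
    (hTsupp : ∀ i j : Fin m, i ≠ j → T i j ≠ 0 → c i = c j)
    (hΔ : ∀ i j : Fin m, Δ i j ≠ 0 → (c j : ℕ) = (c i : ℕ) + 1) :
    (∀ i j : Fin m, (T⁻¹ * Δ * T) i j ≠ 0 → (c j : ℕ) = (c i : ℕ) + 1) ∧
    (∀ k k' : Fin (b + 1), (k' : ℕ) = (k : ℕ) + 1 →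
      (T⁻¹ * Δ * T).submatrix (fun i : {i : Fin m // c i = k} => i.val)
          (fun j : {j : Fin m // c j = k'} => j.val) =
        (T.submatrix (fun i : {i : Fin m // c i = k} => i.val)
            (fun i : {i : Fin m // c i = k} => i.val))⁻¹ *
          Δ.submatrix (fun i : {i : Fin m // c i = k} => i.val)
            (fun j : {j : Fin m // c j = k'} => j.val) *
          T.submatrix (fun j : {j : Fin m // c j = k'} => j.val)
            (fun j : {j : Fin m // c j = k'} => j.val)) := by
  classical
  set N : Matrix (Fin m) (Fin m) F := 1 - T with hNdef
  have hN : ∀ i j : Fin m, ¬ i < j → N i j = 0 := by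
    intro i j hij
    by_cases h' : i = j
    · simp [hNdef, h', Matrix.one_apply, hTdiag]
    · have hji : j < i := lt_of_le_of_ne (not_lt.mp hij) (Ne.symm h')
      simp [hNdef, Matrix.one_apply, h', hTtri i j hji]
  have hNsupp : ∀ i j : Fin m, N i j ≠ 0 → c i = c j := by
    intro i j hij
    by_cases h' : i = j
    · rw [h']
    · refine hTsupp i j h' ?_
      simp only [hNdef, Matrix.sub_apply, Matrix.one_apply, h', if_false] at hij
      intro h0; exact hij (by simp [h0])
  have hNm : N ^ m = 0 := by
    ext i j
    by_contra h0
    have := strict_upper_pow_le N hN m i j (by simpa using h0)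
    have := j.isLt
    omega
  set M : Matrix (Fin m) (Fin m) F := ∑ i ∈ Finset.range m, N ^ i with hMdef
  have hMT : M * T = 1 := by
    have : T = 1 - N := by simp [hNdef]
    rw [this, hMdef, geom_sum_mul_neg, hNm, sub_zero]
  have hTM : T * M = 1 := by
    have : T = 1 - N := by simp [hNdef]
    rw [this, hMdef, mul_neg_geom_sum, hNm, sub_zero]
  have hTinv : T⁻¹ = M := Matrix.inv_eq_right_inv hTM
  have hMsupp : ∀ i j : Fin m, M i j ≠ 0 → c i = c j := by
    have hpow : ∀ n (i j : Fin m), (N ^ n) i j ≠ 0 → c i = c j := by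
      intro n
      induction n with
      | zero =>
        intro i j hij
        rw [pow_zero, Matrix.one_apply] at hij
        by_cases h' : i = j
        · rw [h']
        · simp [h'] at hij
      | succ n ih =>
        intro i j hij
        rw [pow_succ, Matrix.mul_apply] at hij
        obtain ⟨p, -, hp⟩ := Finset.exists_ne_zero_of_sum_ne_zero hij
        have h1 : (N ^ n) i p ≠ 0 := fun h0 => hp (by simp [h0])
        have h2 : N p j ≠ 0 := fun h0 => hp (by simp [h0])
        exact (ih i p h1).trans (hNsupp p j h2)
    intro i j hij
    rw [hMdef, Matrix.sum_apply] at hij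
    obtain ⟨n, -, hn⟩ := Finset.exists_ne_zero_of_sum_ne_zero hij
    exact hpow n i j hn
  have hTsupp' : ∀ i j : Fin m, T i j ≠ 0 → c i = c j := by
    intro i j hij
    by_cases h' : i = j
    · rw [h']
    · exact hTsupp i j h' hij
  -- Part 1
  have part1 : ∀ i j : Fin m, (T⁻¹ * Δ * T) i j ≠ 0 → (c j : ℕ) = (c i : ℕ) + 1 := by
    intro i j hij
    rw [hTinv, Matrix.mul_apply] at hij
    obtain ⟨q, -, hq⟩ := Finset.exists_ne_zero_of_sum_ne_zero hij
    have h1 : (M * Δ) i q ≠ 0 := fun h0 => hq (by simp [h0])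
    have h2 : T q j ≠ 0 := fun h0 => hq (by simp [h0])
    rw [Matrix.mul_apply] at h1
    obtain ⟨p, -, hp⟩ := Finset.exists_ne_zero_of_sum_ne_zero h1
    have h3 : M i p ≠ 0 := fun h0 => hp (by simp [h0])
    have h4 : Δ p q ≠ 0 := fun h0 => hp (by simp [h0])
    have e1 := hMsupp i p h3
    have e2 := hΔ p q h4
    have e3 := hTsupp' q j h2
    rw [← e3, e2, e1]
  refine ⟨part1, ?_⟩
  intro k k' hk
  -- block inverse
  have hMkTk : (M.submatrix (fun i : {i : Fin m // c i = k} => i.val)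
      (fun i : {i : Fin m // c i = k} => i.val)) *
      (T.submatrix (fun i : {i : Fin m // c i = k} => i.val)
      (fun i : {i : Fin m // c i = k} => i.val)) = 1 := by
    ext i j
    rw [Matrix.mul_apply]
    have : ∑ p : {p : Fin m // c p = k}, M i.val p.val * T p.val j.val
        = ∑ p : Fin m, M i.val p * T p j.val := by
      rw [sum_restrict' (fun p => c p = k) (fun p => M i.val p * T p j.val) ?_]
      intro p hp
      have h1 : M i.val p ≠ 0 := fun h0 => hp (by simp [h0])
      rw [← hMsupp i.val p h1, i.2]
    simp only [Matrix.submatrix_apply]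
    rw [this, ← Matrix.mul_apply, hMT]
    by_cases hij : i = j
    · simp [hij, Matrix.one_apply]
    · have : i.val ≠ j.val := fun h => hij (Subtype.ext h)
      simp [Matrix.one_apply, hij, this]
  have hTkinv : (T.submatrix (fun i : {i : Fin m // c i = k} => i.val)
      (fun i : {i : Fin m // c i = k} => i.val))⁻¹ =
      M.submatrix (fun i : {i : Fin m // c i = k} => i.val)
      (fun i : {i : Fin m // c i = k} => i.val) := Matrix.inv_eq_left_inv hMkTk
  rw [hTinv, hTkinv]
  ext i j
  simp only [Matrix.submatrix_apply, Matrix.mul_apply]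
  have step1 : ∀ q : Fin m, (∑ p : Fin m, M i.val p * Δ p q)
      = ∑ p : {p : Fin m // c p = k}, M i.val p.val * Δ p.val q := by
    intro q
    refine sum_restrict' (fun p => c p = k) (fun p => M i.val p * Δ p q) ?_
    intro p hp
    have h1 : M i.val p ≠ 0 := fun h0 => hp (by simp [h0])
    rw [← hMsupp i.val p h1, i.2]
  calc ∑ q : Fin m, (∑ p : Fin m, M i.val p * Δ p q) * T q j.val
      = ∑ q : Fin m, (∑ p : {p : Fin m // c p = k}, M i.val p.val * Δ p.val q) * T q j.val := by
        exact Finset.sum_congr rfl (fun q _ => by rw [step1 q])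
    _ = ∑ q : {q : Fin m // c q = k'}, (∑ p : {p : Fin m // c p = k}, M i.val p.val * Δ p.val q.val) * T q.val j.val := by
        refine sum_restrict' (fun q => c q = k') _ ?_
        intro q hq
        have h2 : T q j.val ≠ 0 := fun h0 => hq (by simp [h0])
        rw [hTsupp' q j.val h2, j.2]
end
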